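/- Let μ be a probability measure on a Borel set Ω ⊆ ℝ^m such that ∫|f| dμ < ∞ for every polynomial f of degree ≤ t. Then there exist n with 1 ≤ n ≤ dim 𝒫_t(Ω), points x₁,…,xₙ ∈ supp μ, and weights w₁,…,wₙ > 0 such that ∫ f dμ = Σⱼ wⱼ f(xⱼ) for all polynomials f of degree ≤ t. -/

import Mathlib

/-!
Let `A = Ω ∩ supp μ` and let `q₁, …, q_k` be polynomials of degree `≤ t` whose restrictions to
`A` form a basis of `𝒫_t(A)`, so `k ≤ dim 𝒫_t(Ω)`. The moment vector `c = ∫ Φ dμ` of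
`Φ y = (q_i(y))_i` lies in the convex cone generated by `Φ(A)`: that cone has interior since
`Φ(A)` spans `ℝ^k`, so otherwise a supporting functional `f ≠ 0` has `f ∘ Φ ≤ 0` on `A` and
`∫ f ∘ Φ = f c ≥ 0`; then the continuous `f ∘ Φ` vanishes a.e., hence on `A ⊆ supp μ`, and `f = 0`.
Writing the constant `1` as `ℓ ∘ Φ` on `A`, all of `Φ(A)` and `c` lie on the hyperplane `ℓ = 1`,
so `c` is in the convex hull of `Φ(A)`. Carathéodory writes `c` as a positive combination of
affinely independent points of `Φ(A)`; on a hyperplane missing `0` these are linearly independent,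
so there are at most `k` of them.
-/

open MeasureTheory MvPolynomial

/-- The support of a measure on `ℝ^m`: the set of points all of whose open
neighborhoods have positive measure. -/
def measSupport {m : ℕ} (μ : Measure (Fin m → ℝ)) : Set (Fin m → ℝ) :=
  {y | ∀ U : Set (Fin m → ℝ), IsOpen U → y ∈ U → μ U ≠ 0}

/-- Restriction of polynomials to functions on `Ω`, as a linear map. -/
noncomputable def polyRestrict {m : ℕ} (Ω : Set (Fin m → ℝ)) :
    MvPolynomial (Fin m) ℝ →ₗ[ℝ] (Ω → ℝ) where
  toFun p := fun x => eval (x : Fin m → ℝ) p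
  map_add' p q := by funext x; simp
  map_smul' c p := by funext x; simp

/-- `𝒫_t(Ω)`: the space of restrictions to `Ω` of real polynomials of total degree
at most `t`. -/
noncomputable def polySpace {m : ℕ} (Ω : Set (Fin m → ℝ)) (t : ℕ) : Submodule ℝ (Ω → ℝ) :=
  (MvPolynomial.restrictTotalDegree (Fin m) ℝ t).map (polyRestrict Ω)

section ConvexGeometry

variable {E : Type*} [AddCommGroup E] [Module ℝ E]

lemma PointedCone.apply_nonpos_of_forall_le {K : PointedCone ℝ E} (f : E →ₗ[ℝ] ℝ) {a : ℝ}
    (hf : ∀ v ∈ K, f v ≤ a) {v : E} (hv : v ∈ K) : f v ≤ 0 := by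
  by_contra! hpos
  have ha : 0 ≤ a := by simpa using hf 0 K.zero_mem
  have hr : 0 ≤ (a + 1) / f v := by positivity
  have := hf (((a + 1) / f v) • v) (K.smul_mem hr hv)
  rw [map_smul, smul_eq_mul, div_mul_cancel₀ _ hpos.ne'] at this
  linarith

lemma mem_convexHull_of_mem_hull {S : Set E} {v : E} (ℓ : E →ₗ[ℝ] ℝ) (hS : ∀ s ∈ S, ℓ s = 1)
    (hv : v ∈ PointedCone.hull ℝ S) (hℓv : ℓ v = 1) : v ∈ convexHull ℝ S := by
  obtain ⟨c, hcS, hc₀, rfl⟩ := PointedCone.mem_hull_set.1 hv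
  have hc₁ : ∑ s ∈ c.support, c s = 1 := by
    rw [← hℓv, Finsupp.sum, map_sum]
    refine Finset.sum_congr rfl fun s hs => ?_
    rw [map_smul, hS s (hcS hs), smul_eq_mul, mul_one]
  exact (convex_convexHull ℝ S).sum_mem (fun s _ => hc₀ s) hc₁
    fun s hs => subset_convexHull ℝ S (hcS hs)

lemma AffineIndependent.linearIndependent_of_forall_eq_one {ι : Type*} {z : ι → E}
    (hz : AffineIndependent ℝ z) (ℓ : E →ₗ[ℝ] ℝ) (hℓ : ∀ i, ℓ (z i) = 1) :
    LinearIndependent ℝ z :=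
  linearIndependent_iff'.2 fun s g hg =>
    hz.eq_zero_of_sum_eq_zero (by simpa [hℓ] using congr_arg ℓ hg) hg

lemma exists_pos_sum_smul_eq_of_mem_convexHull [FiniteDimensional ℝ E] {S : Set E} {c : E}
    (hc : c ∈ convexHull ℝ S) (ℓ : E →ₗ[ℝ] ℝ) (hS : ∀ s ∈ S, ℓ s = 1) :
    ∃ n, 1 ≤ n ∧ n ≤ Module.finrank ℝ E ∧ ∃ (z : Fin n → E) (w : Fin n → ℝ),
      (∀ j, z j ∈ S) ∧ (∀ j, 0 < w j) ∧ ∑ j, w j • z j = c := by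
  obtain ⟨ι, _, z, w, hzS, hz, hw, hw₁, hwz⟩ := eq_pos_convex_span_of_mem_convexHull hc
  have : Nonempty ι := by
    by_contra! _
    simp at hw₁
  let e := Fintype.equivFin ι
  refine ⟨Fintype.card ι, Fintype.card_pos, ?_, z ∘ e.symm, w ∘ e.symm,
    fun j => hzS ⟨_, rfl⟩, fun j => hw _, ?_⟩
  · exact (hz.linearIndependent_of_forall_eq_one ℓ fun i => hS _ (hzS ⟨i, rfl⟩))
      |>.fintype_card_le_finrank
  · rw [← hwz]
    exact e.symm.sum_comp fun i => w i • z i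

end ConvexGeometry

section Cubature

variable {X E : Type*} [MeasurableSpace X] {μ : Measure X}
  [NormedAddCommGroup E] [NormedSpace ℝ E] [FiniteDimensional ℝ E]

lemma integral_eq_apply_integral_of_eqOn {Φ : X → E} (hΦ : Integrable Φ μ) {A : Set X}
    (hA : μ Aᶜ = 0) (ℓ : E →ₗ[ℝ] ℝ) {g : X → ℝ} (hg : ∀ x ∈ A, g x = ℓ (Φ x)) :
    ∫ x, g x ∂μ = ℓ (∫ x, Φ x ∂μ) := by
  have hgΦ : g =ᵐ[μ] fun x => ℓ (Φ x) := measure_mono_null (fun x hx hxA => hx (hg x hxA)) hA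
  rw [integral_congr_ae hgΦ]
  exact (LinearMap.toContinuousLinearMap ℓ).integral_comp_comm hΦ

variable [TopologicalSpace X]

lemma Continuous.eq_zero_of_mem_support {g : X → ℝ} (hg : Continuous g) (h0 : g =ᵐ[μ] 0)
    {x : X} (hx : x ∈ μ.support) : g x = 0 := by
  by_contra hne
  exact Measure.subset_compl_support_of_isOpen (isOpen_ne_fun hg continuous_const)
    (ae_iff.1 h0) hne hx

theorem integral_mem_hull_image {Φ : X → E} (hΦ : Continuous Φ) (hΦi : Integrable Φ μ)
    {A : Set X} (hA : μ Aᶜ = 0) (hAs : A ⊆ μ.support)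
    (hspan : Submodule.span ℝ (Φ '' A) = ⊤) :
    ∫ x, Φ x ∂μ ∈ PointedCone.hull ℝ (Φ '' A) := by
  set K := PointedCone.hull ℝ (Φ '' A)
  have hK : (interior (K : Set E)).Nonempty := by
    refine K.convex.interior_nonempty_iff_affineSpan_eq_top.2 ?_
    rw [AffineSubspace.affineSpan_eq_top_iff_vectorSpan_eq_top_of_nonempty ℝ E E ⟨0, K.zero_mem⟩,
      vectorSpan_eq_span_vsub_set_right ℝ K.zero_mem, eq_top_iff, ← hspan]
    exact Submodule.span_mono fun v hv => ⟨v, PointedCone.subset_hull hv, by simp⟩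
  by_contra hc
  obtain ⟨f, hf0, hfK⟩ :=
    geometric_hahn_banach_of_nonempty_interior_point K.convex (fun h => hc (interior_subset h)) hK
  have hfΦ : ∀ x ∈ A, f (Φ x) ≤ 0 := fun x hx =>
    K.apply_nonpos_of_forall_le f.toLinearMap hfK (PointedCone.subset_hull ⟨x, hx, rfl⟩)
  have hnonneg : 0 ≤ᵐ[μ] fun x => -f (Φ x) :=
    measure_mono_null (fun x hx hxA => hx (neg_nonneg.2 (hfΦ x hxA))) hA
  have hzero : ∫ x, -f (Φ x) ∂μ = 0 := by
    refine le_antisymm ?_ (integral_nonneg_of_ae hnonneg)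
    rw [integral_neg, f.integral_comp_comm hΦi, neg_nonpos]
    simpa using hfK 0 K.zero_mem
  have hae := (integral_eq_zero_iff_of_nonneg_ae hnonneg (f.integrable_comp hΦi).neg).1 hzero
  have hfA : ∀ x ∈ A, f (Φ x) = 0 := fun x hx =>
    neg_eq_zero.1 ((f.continuous.comp hΦ).neg.eq_zero_of_mem_support hae (hAs hx))
  apply hf0
  refine ContinuousLinearMap.coe_injective (LinearMap.ext_on hspan ?_)
  rintro _ ⟨x, hx, rfl⟩
  simpa using hfA x hx

theorem exists_integral_eq_sum_smul [IsProbabilityMeasure μ] {Φ : X → E} (hΦ : Continuous Φ)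
    (hΦi : Integrable Φ μ) {A : Set X} (hA : μ Aᶜ = 0) (hAs : A ⊆ μ.support)
    (hspan : Submodule.span ℝ (Φ '' A) = ⊤) (ℓ : E →ₗ[ℝ] ℝ) (hℓ : ∀ x ∈ A, ℓ (Φ x) = 1) :
    ∃ n, 1 ≤ n ∧ n ≤ Module.finrank ℝ E ∧ ∃ (x : Fin n → X) (w : Fin n → ℝ),
      (∀ j, x j ∈ A) ∧ (∀ j, 0 < w j) ∧ ∫ y, Φ y ∂μ = ∑ j, w j • Φ (x j) := by
  have hℓS : ∀ v ∈ Φ '' A, ℓ v = 1 := by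
    rintro _ ⟨x, hx, rfl⟩
    exact hℓ x hx
  have hℓc : ℓ (∫ y, Φ y ∂μ) = 1 := by
    rw [← integral_eq_apply_integral_of_eqOn hΦi hA ℓ fun x hx => (hℓ x hx).symm]
    simp
  obtain ⟨n, hn₁, hnE, z, w, hzA, hw, hwz⟩ := exists_pos_sum_smul_eq_of_mem_convexHull
    (mem_convexHull_of_mem_hull ℓ hℓS (integral_mem_hull_image hΦ hΦi hA hAs hspan) hℓc) ℓ hℓS
  choose x hxA hxz using hzA
  refine ⟨n, hn₁, hnE, x, w, hxA, hw, ?_⟩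
  simp_rw [hxz, hwz]

end Cubature

section Evaluation

variable {ι α : Type*} [Fintype ι]

lemma span_range_eval_eq_top_of_linearIndependent {v : ι → α → ℝ} (hv : LinearIndependent ℝ v) :
    Submodule.span ℝ (Set.range fun x i => v i x) = ⊤ := by
  classical
  by_contra hne
  obtain ⟨φ, hφ0, hφ⟩ := Submodule.exists_dual_map_eq_bot_of_lt_top (lt_top_iff_ne_top.2 hne)
    inferInstance
  have hφv : ∀ x, φ (fun i => v i x) = 0 := fun x => by
    have := Submodule.mem_map_of_mem (f := φ)
      (Submodule.subset_span (R := ℝ) (Set.mem_range_self (f := fun x i => v i x) x))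
    rwa [hφ, Submodule.mem_bot] at this
  have hφe : ∀ i, φ (Pi.single i 1) = 0 := by
    refine Fintype.linearIndependent_iff.1 hv _ (funext fun x => ?_)
    rw [Pi.zero_apply, ← hφv x, LinearMap.pi_apply_eq_sum_univ φ, Finset.sum_apply]
    simp only [Pi.smul_apply, smul_eq_mul, mul_comm]
    congr! 4 with i j
    simp [Pi.single_apply, eq_comm]
  exact hφ0 ((Pi.basisFun ℝ ι).ext fun i => by simpa using hφe i)

lemma exists_linearMap_eq_of_mem_span {v : ι → α → ℝ} {g : α → ℝ}
    (hg : g ∈ Submodule.span ℝ (Set.range v)) :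
    ∃ ℓ : (ι → ℝ) →ₗ[ℝ] ℝ, ∀ x, g x = ℓ fun i => v i x := by
  obtain ⟨c, rfl⟩ := (Submodule.mem_span_range_iff_exists_fun ℝ).1 hg
  refine ⟨Fintype.linearCombination ℝ c, fun x => ?_⟩
  simp [Fintype.linearCombination_apply, mul_comm]

end Evaluation

section Polynomial

variable {m : ℕ}

lemma measSupport_eq_support (μ : Measure (Fin m → ℝ)) : measSupport μ = μ.support := by
  ext y
  simp only [measSupport, Measure.support_eq_forall_isOpen, Set.mem_ofPred_eq, pos_iff_ne_zero]
  exact forall_congr' fun U => imp.swap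

lemma finrank_map_polyRestrict_le {t : ℕ} {A Ω : Set (Fin m → ℝ)} (h : A ⊆ Ω) :
    Module.finrank ℝ ((restrictTotalDegree (Fin m) ℝ t).map (polyRestrict A)) ≤
      Module.finrank ℝ (polySpace Ω t) := by
  have : polyRestrict A = (LinearMap.funLeft ℝ ℝ (Set.inclusion h)).comp (polyRestrict Ω) := rfl
  rw [this, Submodule.map_comp]
  have : Module.Finite ℝ (polySpace Ω t) := Module.Finite.map _ _
  exact Submodule.finrank_map_le _ _

theorem exists_polynomial_moment_map {A Ω : Set (Fin m → ℝ)} (hAΩ : A ⊆ Ω) (t : ℕ) :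
    ∃ (k : ℕ) (q : Fin k → MvPolynomial (Fin m) ℝ), k ≤ Module.finrank ℝ (polySpace Ω t) ∧
      (∀ i, (q i).totalDegree ≤ t) ∧
      Submodule.span ℝ ((fun y i => eval y (q i)) '' A) = ⊤ ∧
      ∀ f : MvPolynomial (Fin m) ℝ, f.totalDegree ≤ t →
        ∃ ℓ : (Fin k → ℝ) →ₗ[ℝ] ℝ, ∀ x ∈ A, eval x f = ℓ fun i => eval x (q i) := by
  set V := (restrictTotalDegree (Fin m) ℝ t).map (polyRestrict A)
  let b := Module.finBasis ℝ V
  choose q hqt hqb using fun i => Submodule.mem_map.1 (b i).2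
  have hqb' : ∀ x : A, (fun i => eval (x : Fin m → ℝ) (q i)) = fun i => (b i : A → ℝ) x :=
    fun x => by simp only [← hqb]; rfl
  refine ⟨_, q, finrank_map_polyRestrict_le hAΩ,
    fun i => (mem_restrictTotalDegree _ _ _).1 (hqt i), ?_, fun f hf => ?_⟩
  · rw [Set.image_eq_range, funext hqb']
    exact span_range_eval_eq_top_of_linearIndependent
      (b.linearIndependent.map' V.subtype V.ker_subtype)
  · have hfV := Submodule.apply_mem_span_image_of_mem_span V.subtype
      (b.mem_span ⟨_, Submodule.mem_map_of_mem ((mem_restrictTotalDegree _ _ _).2 hf)⟩)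
    rw [← Set.range_comp] at hfV
    obtain ⟨ℓ, hℓ⟩ := exists_linearMap_eq_of_mem_span hfV
    exact ⟨ℓ, fun x hx => by rw [hqb' ⟨x, hx⟩]; exact hℓ ⟨x, hx⟩⟩

end Polynomial

theorem tchakaloff_general {m t : ℕ} (Ω : Set (Fin m → ℝ))
    (μ : Measure (Fin m → ℝ)) [IsProbabilityMeasure μ] (hμΩ : μ Ωᶜ = 0)
    (hint : ∀ f : MvPolynomial (Fin m) ℝ, f.totalDegree ≤ t →
      Integrable (fun y => eval y f) μ) :
    ∃ n : ℕ, 1 ≤ n ∧ n ≤ Module.finrank ℝ (polySpace Ω t) ∧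
      ∃ (x : Fin n → Fin m → ℝ) (w : Fin n → ℝ),
        (∀ j, x j ∈ Ω ∧ x j ∈ measSupport μ) ∧ (∀ j, 0 < w j) ∧
        ∀ f : MvPolynomial (Fin m) ℝ, f.totalDegree ≤ t →
          ∫ y, eval y f ∂μ = ∑ j, w j * eval (x j) f := by
  set A := Ω ∩ μ.support
  have hA : μ Aᶜ = 0 := by
    rw [Set.compl_inter]
    exact measure_union_null hμΩ μ.measure_compl_support
  obtain ⟨k, q, hk, hqt, hspan, hcoord⟩ := exists_polynomial_moment_map Set.inter_subset_left t
  set Φ : (Fin m → ℝ) → Fin k → ℝ := fun y i => eval y (q i)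
  have hΦc : Continuous Φ := continuous_pi fun i => continuous_eval (q i)
  have hΦi : Integrable Φ μ := Integrable.of_eval fun i => hint (q i) (hqt i)
  obtain ⟨ℓ₁, hℓ₁⟩ := hcoord 1 (by simp)
  obtain ⟨n, hn₁, hnk, x, w, hxA, hw, hsum⟩ := exists_integral_eq_sum_smul hΦc hΦi hA
    Set.inter_subset_right hspan ℓ₁ fun x hx => by simpa using (hℓ₁ x hx).symm
  rw [Module.finrank_fin_fun] at hnk
  refine ⟨n, hn₁, hnk.trans hk, x, w,
    fun j => ⟨(hxA j).1, (measSupport_eq_support μ).symm ▸ (hxA j).2⟩, hw, fun f hf => ?_⟩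
  obtain ⟨ℓ, hℓ⟩ := hcoord f hf
  rw [integral_eq_apply_integral_of_eqOn hΦi hA ℓ hℓ, hsum, map_sum]
  simp [Φ, hℓ _ (hxA _)]

/-- Tchakaloff's theorem (Theorem 2.1): a probability measure `μ` on a Borel set
`Ω ⊆ ℝ^m` integrating all polynomials of degree `≤ t` admits a cubature formula of
degree `t` with `1 ≤ n ≤ dim 𝒫_t(Ω)` points in `supp μ ⊆ Ω`. -/
theorem tchakaloff {m t : ℕ} (Ω : Set (Fin m → ℝ)) (hΩ : MeasurableSet Ω)
    (μ : Measure (Fin m → ℝ)) [IsProbabilityMeasure μ] (hμΩ : μ Ωᶜ = 0)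
    (hint : ∀ f : MvPolynomial (Fin m) ℝ, f.totalDegree ≤ t →
      Integrable (fun y => eval y f) μ) :
    ∃ n : ℕ, 1 ≤ n ∧ n ≤ Module.finrank ℝ (polySpace Ω t) ∧
      ∃ (x : Fin n → Fin m → ℝ) (w : Fin n → ℝ),
        (∀ j, x j ∈ Ω ∧ x j ∈ measSupport μ) ∧ (∀ j, 0 < w j) ∧
        ∀ f : MvPolynomial (Fin m) ℝ, f.totalDegree ≤ t →
          ∫ y, eval y f ∂μ = ∑ j, w j * eval (x j) f :=
  tchakaloff_general Ω μ hμΩ hint
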